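/- The trailing T×T block principal submatrix inequality 𝐂_{T+1}^{[2:T+1, 2:T+1]} ⪯ 𝐂_T^{[1:T, 1:T]} holds, i.e., the clairvoyant baseline shift matrix Δ_f restricted to its trailing block is negative semidefinite. (Claim established in the proof of Theorem 1.) -/

import Mathlib

open Matrix

noncomputable section

/-- Index type for stacked state / disturbance trajectories over horizon `T`:
block index in `Fin (T+1)`, coordinate in `Fin n`. -/
abbrev SIdx (n T : ℕ) := Fin (T + 1) × Fin n

/-- Index type for stacked input trajectories over horizon `T`. -/
abbrev UIdx (m T : ℕ) := Fin T × Fin m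

/-- The block-downshift operator `𝐙`. -/
def Zshift (n T : ℕ) : Matrix (SIdx n T) (SIdx n T) ℝ :=
  Matrix.of fun p q => if (p.1 : ℕ) = (q.1 : ℕ) + 1 ∧ p.2 = q.2 then (1 : ℝ) else 0

/-- `𝐀 = I_{T+1} ⊗ A`. -/
def bigA (n T : ℕ) (A : Matrix (Fin n) (Fin n) ℝ) : Matrix (SIdx n T) (SIdx n T) ℝ :=
  Matrix.of fun p q => if p.1 = q.1 then A p.2 q.2 else 0

/-- `𝐁 = col(I_T ⊗ B, 0)`. -/
def bigB (n m T : ℕ) (B : Matrix (Fin n) (Fin m) ℝ) : Matrix (SIdx n T) (UIdx m T) ℝ :=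
  Matrix.of fun p q => if (p.1 : ℕ) = (q.1 : ℕ) then B p.2 q.2 else 0

/-- `𝐐 = blkdiag(I_T ⊗ Q, 0)`. -/
def bigQ (n T : ℕ) (Q : Matrix (Fin n) (Fin n) ℝ) : Matrix (SIdx n T) (SIdx n T) ℝ :=
  Matrix.of fun p q => if p.1 = q.1 ∧ (p.1 : ℕ) < T then Q p.2 q.2 else 0

/-- `𝐑 = I_T ⊗ R`. -/
def bigR (m T : ℕ) (R : Matrix (Fin m) (Fin m) ℝ) : Matrix (UIdx m T) (UIdx m T) ℝ :=
  Matrix.of fun p q => if p.1 = q.1 then R p.2 q.2 else 0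

/-- `𝐅 = (I − 𝐙𝐀)⁻¹𝐙𝐁`. -/
def bigF (n m T : ℕ) (A : Matrix (Fin n) (Fin n) ℝ) (B : Matrix (Fin n) (Fin m) ℝ) :
    Matrix (SIdx n T) (UIdx m T) ℝ :=
  (1 - Zshift n T * bigA n T A)⁻¹ * (Zshift n T * bigB n m T B)

/-- `𝐆 = (I − 𝐙𝐀)⁻¹`. -/
def bigG (n T : ℕ) (A : Matrix (Fin n) (Fin n) ℝ) : Matrix (SIdx n T) (SIdx n T) ℝ :=
  (1 - Zshift n T * bigA n T A)⁻¹

/-- The control cost `J_T(u, δ) = xᵀ𝐐x + uᵀ𝐑u` with `x = 𝐅u + 𝐆δ`. -/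
def costJ (n m T : ℕ) (A : Matrix (Fin n) (Fin n) ℝ) (B : Matrix (Fin n) (Fin m) ℝ)
    (Q : Matrix (Fin n) (Fin n) ℝ) (R : Matrix (Fin m) (Fin m) ℝ)
    (u : UIdx m T → ℝ) (δ : SIdx n T → ℝ) : ℝ :=
  let x := bigF n m T A B *ᵥ u + bigG n T A *ᵥ δ
  x ⬝ᵥ (bigQ n T Q *ᵥ x) + u ⬝ᵥ (bigR m T R *ᵥ u)

/-- `𝐏 = 𝐑 + 𝐅ᵀ𝐐𝐅`. -/
def bigP (n m T : ℕ) (A : Matrix (Fin n) (Fin n) ℝ) (B : Matrix (Fin n) (Fin m) ℝ)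
    (Q : Matrix (Fin n) (Fin n) ℝ) (R : Matrix (Fin m) (Fin m) ℝ) :
    Matrix (UIdx m T) (UIdx m T) ℝ :=
  bigR m T R + (bigF n m T A B)ᵀ * bigQ n T Q * bigF n m T A B

/-- The clairvoyant cost matrix `𝐂_T = 𝐆ᵀ𝐐(I + 𝐅𝐑⁻¹𝐅ᵀ𝐐)⁻¹𝐆`. -/
def Cmat (n m T : ℕ) (A : Matrix (Fin n) (Fin n) ℝ) (B : Matrix (Fin n) (Fin m) ℝ)
    (Q : Matrix (Fin n) (Fin n) ℝ) (R : Matrix (Fin m) (Fin m) ℝ) :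
    Matrix (SIdx n T) (SIdx n T) ℝ :=
  (bigG n T A)ᵀ * bigQ n T Q *
    (1 + bigF n m T A B * (bigR m T R)⁻¹ * (bigF n m T A B)ᵀ * bigQ n T Q)⁻¹ * bigG n T A

/-- Assemble `δ = col(x₀, w₀, …, w_{T−1})`. -/
def assemble (n T : ℕ) (x0 : Fin n → ℝ) (w : Fin T × Fin n → ℝ) : SIdx n T → ℝ :=
  fun p => if h : (p.1 : ℕ) = 0 then x0 p.2
    else w (⟨(p.1 : ℕ) - 1, by have := p.1.isLt; omega⟩, p.2)

/-! `δᵀ 𝐂_L δ` is the least value of the cost `J_L(·, δ)`: Woodbury's identity rewrites `𝐂_L` as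
`𝐆ᵀ(𝐐 - 𝐐𝐅𝐏⁻¹𝐅ᵀ𝐐)𝐆` with `𝐏 = 𝐑 + 𝐅ᵀ𝐐𝐅 ≻ 0`, and completing the square in the input gives
the minimum. Delaying a disturbance with zero initial state by one step, together with the input,
just delays the state trajectory; since the stage costs are time-invariant and the final stage is
unweighted, `J_{T+1}` of the delayed data equals `J_T`. Hence for `δ` supported on blocks
`1, …, T` and its optimal input `u*`,
`(𝐒δ)ᵀ 𝐂_{T+1} (𝐒δ) ≤ J_{T+1}(𝐒u*, 𝐒δ) = J_T(u*, δ) = δᵀ 𝐂_T δ`, where `𝐒` is the delay. -/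

open scoped Kronecker

section QuadraticForms

variable {ι κ : Type*} [Fintype ι] [Fintype κ]

theorem Matrix.IsSymm.dotProduct_mulVec_comm {M : Matrix κ κ ℝ} (hM : M.IsSymm) (x y : κ → ℝ) :
    x ⬝ᵥ (M *ᵥ y) = y ⬝ᵥ (M *ᵥ x) := by
  rw [← dotProduct_transpose_mulVec, hM.eq]

theorem Matrix.dotProduct_transpose_mul_mul_mulVec (M : Matrix ι κ ℝ) (X : Matrix ι ι ℝ)
    (x : κ → ℝ) : x ⬝ᵥ ((Mᵀ * X * M) *ᵥ x) = (M *ᵥ x) ⬝ᵥ (X *ᵥ (M *ᵥ x)) := by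
  rw [← mulVec_mulVec, ← mulVec_mulVec, dotProduct_transpose_mulVec, dotProduct_comm]

theorem Matrix.IsSymm.quadratic_cost_expand {Q : Matrix ι ι ℝ} (hQ : Q.IsSymm)
    (R : Matrix κ κ ℝ) (F : Matrix ι κ ℝ) (u : κ → ℝ) (g : ι → ℝ) :
    (F *ᵥ u + g) ⬝ᵥ (Q *ᵥ (F *ᵥ u + g)) + u ⬝ᵥ (R *ᵥ u) =
      u ⬝ᵥ ((R + Fᵀ * Q * F) *ᵥ u) + 2 * (u ⬝ᵥ (Fᵀ *ᵥ (Q *ᵥ g))) + g ⬝ᵥ (Q *ᵥ g) := by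
  have hcross : (F *ᵥ u) ⬝ᵥ (Q *ᵥ g) = u ⬝ᵥ (Fᵀ *ᵥ (Q *ᵥ g)) := by
    rw [dotProduct_transpose_mulVec, dotProduct_comm]
  rw [add_mulVec, dotProduct_add, mulVec_add, add_dotProduct, dotProduct_add, dotProduct_add,
    hQ.dotProduct_mulVec_comm g, hcross, dotProduct_transpose_mul_mul_mulVec]
  ring

theorem Matrix.PosDef.isLeast_dotProduct_mulVec_add [DecidableEq κ] {P : Matrix κ κ ℝ}
    (hP : P.PosDef) (b : κ → ℝ) :
    IsLeast (Set.range fun u => u ⬝ᵥ (P *ᵥ u) + 2 * (u ⬝ᵥ b)) (-(b ⬝ᵥ (P⁻¹ *ᵥ b))) := by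
  have hPc : P *ᵥ (P⁻¹ *ᵥ b) = b := by
    rw [mulVec_mulVec, mul_nonsing_inv _ ((isUnit_iff_isUnit_det P).mp hP.isUnit), one_mulVec]
  have hsquare (u : κ → ℝ) : u ⬝ᵥ (P *ᵥ u) + 2 * (u ⬝ᵥ b) =
      (u + P⁻¹ *ᵥ b) ⬝ᵥ (P *ᵥ (u + P⁻¹ *ᵥ b)) - b ⬝ᵥ (P⁻¹ *ᵥ b) := by
    have hPsymm : P.IsSymm := by simpa using hP.1
    rw [mulVec_add, hPc, add_dotProduct, dotProduct_add, dotProduct_add,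
      hPsymm.dotProduct_mulVec_comm (P⁻¹ *ᵥ b) u, hPc, dotProduct_comm _ b,
      dotProduct_comm (P⁻¹ *ᵥ b)]
    ring
  refine ⟨⟨-(P⁻¹ *ᵥ b), ?_⟩, ?_⟩
  · simp only [hsquare, neg_add_cancel, mulVec_zero, dotProduct_zero, zero_sub]
  · rintro _ ⟨u, rfl⟩
    have := hP.posSemidef.dotProduct_mulVec_nonneg (u + P⁻¹ *ᵥ b)
    rw [star_trivial] at this
    simp only [hsquare]
    linarith

end QuadraticForms

section Inverses

variable {ι κ : Type*} [Fintype ι] [DecidableEq ι] [Fintype κ] [DecidableEq κ]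

theorem Matrix.inv_one_add_mul_inv_mul {α : Type*} [CommRing α] {F : Matrix ι κ α}
    {R : Matrix κ κ α} {V : Matrix κ ι α} (hR : IsUnit R) (hP : IsUnit (R + V * F)) :
    (1 + F * R⁻¹ * V)⁻¹ = 1 - F * (R + V * F)⁻¹ * V := by
  have hRR : R⁻¹⁻¹ = R := nonsing_inv_nonsing_inv _ ((isUnit_iff_isUnit_det R).mp hR)
  simpa only [inv_one, Matrix.mul_one, Matrix.one_mul, hRR] using
    add_mul_mul_inv_eq_sub 1 F R⁻¹ V isUnit_one (isUnit_nonsing_inv_iff.mpr hR)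
      (by simpa only [inv_one, Matrix.mul_one, hRR] using hP)

theorem Matrix.nonsing_inv_mul_eq_mul_nonsing_inv {X : Matrix ι ι ℝ} {Y : Matrix κ κ ℝ}
    {S : Matrix ι κ ℝ} (hX : IsUnit X) (hY : IsUnit Y) (h : X * S = S * Y) :
    X⁻¹ * S = S * Y⁻¹ := by
  calc X⁻¹ * S = X⁻¹ * (X * S) * Y⁻¹ := by
        rw [h, Matrix.mul_assoc, Matrix.mul_assoc, mul_nonsing_inv _
          ((isUnit_iff_isUnit_det Y).mp hY), Matrix.mul_one]
    _ = S * Y⁻¹ := by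
        rw [← Matrix.mul_assoc, nonsing_inv_mul _ ((isUnit_iff_isUnit_det X).mp hX),
          Matrix.one_mul]

end Inverses

section BlockShift

def blockShift (ι : Type*) [DecidableEq ι] (k l : ℕ) : Matrix (Fin k × ι) (Fin l × ι) ℝ :=
  of fun p q => if (p.1 : ℕ) = q.1 + 1 ∧ p.2 = q.2 then 1 else 0

variable {ι : Type*} [Fintype ι] [DecidableEq ι] {α : Type*}

theorem Zshift_eq_blockShift (n L : ℕ) : Zshift n L = blockShift (Fin n) (L + 1) (L + 1) := rfl

theorem blockShift_mul_apply {k l : ℕ} (M : Matrix (Fin l × ι) α ℝ) (p : Fin k × ι) (a : α) :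
    (blockShift ι k l * M) p a =
      if h : 1 ≤ (p.1 : ℕ) ∧ (p.1 : ℕ) - 1 < l then M (⟨p.1 - 1, h.2⟩, p.2) a else 0 := by
  rw [mul_apply]
  split_ifs with h
  · rw [Finset.sum_eq_single (⟨⟨p.1 - 1, h.2⟩, p.2⟩ : Fin l × ι)]
    · simp only [blockShift, of_apply, and_true, ite_mul, one_mul, zero_mul, ite_eq_left_iff]
      omega
    · rintro ⟨j, i⟩ - hne
      simp only [blockShift, of_apply, ite_mul, one_mul, zero_mul]
      refine if_neg fun ⟨hj, hi⟩ => hne ?_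
      ext
      · dsimp only
        omega
      · exact hi.symm
    · simp
  · refine Finset.sum_eq_zero fun ⟨j, i⟩ _ => ?_
    simp only [blockShift, of_apply, ite_mul, one_mul, zero_mul]
    exact if_neg fun ⟨hj, _⟩ => h ⟨by omega, by have := j.isLt; omega⟩

theorem mul_blockShift_apply {k l : ℕ} (M : Matrix α (Fin k × ι) ℝ) (a : α) (q : Fin l × ι) :
    (M * blockShift ι k l) a q =
      if h : (q.1 : ℕ) + 1 < k then M a (⟨q.1 + 1, h⟩, q.2) else 0 := by
  rw [mul_apply]
  split_ifs with h
  · rw [Finset.sum_eq_single (⟨⟨q.1 + 1, h⟩, q.2⟩ : Fin k × ι)]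
    · simp [blockShift]
    · rintro ⟨j, i⟩ - hne
      simp only [blockShift, of_apply, mul_ite, mul_one, mul_zero]
      refine if_neg fun ⟨hj, hi⟩ => hne ?_
      ext
      · dsimp only
        omega
      · exact hi
    · simp
  · refine Finset.sum_eq_zero fun ⟨j, i⟩ _ => ?_
    simp only [blockShift, of_apply, mul_ite, mul_one, mul_zero]
    exact if_neg fun ⟨hj, _⟩ => h (by omega)

theorem transpose_blockShift_mul_apply {k l : ℕ} (M : Matrix (Fin k × ι) α ℝ)
    (q : Fin l × ι) (a : α) :
    ((blockShift ι k l)ᵀ * M) q a =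
      if h : (q.1 : ℕ) + 1 < k then M (⟨q.1 + 1, h⟩, q.2) a else 0 := by
  rw [← transpose_transpose M, ← transpose_mul, transpose_apply, mul_blockShift_apply]
  rfl

theorem submatrix_succ_eq_transpose_blockShift_mul {k : ℕ}
    (M : Matrix (Fin (k + 1) × ι) (Fin (k + 1) × ι) ℝ) :
    M.submatrix (fun c : Fin k × ι => (c.1.succ, c.2)) (fun c : Fin k × ι => (c.1.succ, c.2)) =
      (blockShift ι (k + 1) k)ᵀ * M * blockShift ι (k + 1) k := by
  ext p q
  simp only [submatrix_apply, mul_blockShift_apply, transpose_blockShift_mul_apply, Fin.is_lt,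
    Order.lt_add_one_iff, Order.add_one_le_iff, dite_true]
  rfl

end BlockShift

section StrictlyLower

variable {ι : Type*} [Fintype ι] [DecidableEq ι] {k : ℕ}

theorem pow_apply_eq_zero_of_strictBlockLower {N : Matrix (Fin k × ι) (Fin k × ι) ℝ}
    (hN : ∀ p q, (p.1 : ℕ) ≤ q.1 → N p q = 0) (j : ℕ) (p q : Fin k × ι)
    (hpq : (p.1 : ℕ) < q.1 + j) : (N ^ j) p q = 0 := by
  induction j generalizing q with
  | zero => exact one_apply_ne fun h => by subst h; omega
  | succ j ih =>
    rw [pow_succ, mul_apply]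
    refine Finset.sum_eq_zero fun r _ => ?_
    by_cases hpr : (p.1 : ℕ) < r.1 + j
    · rw [ih r hpr, zero_mul]
    · rw [hN r q (by omega), mul_zero]

theorem isUnit_one_sub_of_strictBlockLower {N : Matrix (Fin k × ι) (Fin k × ι) ℝ}
    (hN : ∀ p q, (p.1 : ℕ) ≤ q.1 → N p q = 0) : IsUnit (1 - N) :=
  IsNilpotent.isUnit_one_sub ⟨k, ext fun p q =>
    pow_apply_eq_zero_of_strictBlockLower hN k p q (by omega)⟩

end StrictlyLower

section Model

variable {n m : ℕ} (L : ℕ)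

theorem isUnit_one_sub_Zshift_mul_bigA (A : Matrix (Fin n) (Fin n) ℝ) :
    IsUnit (1 - Zshift n L * bigA n L A) := by
  refine isUnit_one_sub_of_strictBlockLower fun p q hpq => ?_
  rw [Zshift_eq_blockShift, blockShift_mul_apply]
  split_ifs with h
  · simp only [bigA, of_apply, Fin.ext_iff]
    rw [if_neg (by omega)]
  · rfl

theorem bigQ_eq_kronecker (Q : Matrix (Fin n) (Fin n) ℝ) :
    bigQ n L Q = diagonal (fun t : Fin (L + 1) => if (t : ℕ) < L then 1 else 0) ⊗ₖ Q := by
  ext ⟨t, i⟩ ⟨s, j⟩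
  simp only [bigQ, ite_and, of_apply, kroneckerMap_apply, diagonal_apply, ite_mul, one_mul,
    zero_mul]

theorem bigR_eq_kronecker (R : Matrix (Fin m) (Fin m) ℝ) : bigR m L R = 1 ⊗ₖ R := by
  ext ⟨t, i⟩ ⟨s, j⟩
  simp only [bigR, of_apply, kroneckerMap_apply, one_apply, ite_mul, one_mul, zero_mul]

variable {L} {Q : Matrix (Fin n) (Fin n) ℝ} {R : Matrix (Fin m) (Fin m) ℝ}

theorem bigQ_posSemidef (hQ : Q.PosSemidef) : (bigQ n L Q).PosSemidef := by
  rw [bigQ_eq_kronecker]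
  refine (PosSemidef.diagonal fun t => ?_).kronecker hQ
  dsimp only
  split_ifs <;> norm_num

theorem bigQ_isSymm (hQ : Q.PosSemidef) : (bigQ n L Q).IsSymm := by
  simpa using (bigQ_posSemidef hQ).1

theorem bigR_posDef (hR : R.PosDef) : (bigR m L R).PosDef := by
  rw [bigR_eq_kronecker]
  exact PosDef.one.kronecker hR

theorem bigP_posDef (A : Matrix (Fin n) (Fin n) ℝ) (B : Matrix (Fin n) (Fin m) ℝ)
    (hQ : Q.PosSemidef) (hR : R.PosDef) : (bigP n m L A B Q R).PosDef := by
  refine (bigR_posDef hR).add_posSemidef ?_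
  simpa using (bigQ_posSemidef (L := L) hQ).conjTranspose_mul_mul_same (bigF n m L A B)

end Model

section Clairvoyant

variable {n m L : ℕ} (A : Matrix (Fin n) (Fin n) ℝ) (B : Matrix (Fin n) (Fin m) ℝ)
  {Q : Matrix (Fin n) (Fin n) ℝ} {R : Matrix (Fin m) (Fin m) ℝ}

theorem Cmat_eq (hQ : Q.PosSemidef) (hR : R.PosDef) :
    Cmat n m L A B Q R = (bigG n L A)ᵀ *
      (bigQ n L Q - ((bigF n m L A B)ᵀ * bigQ n L Q)ᵀ * (bigP n m L A B Q R)⁻¹ *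
        ((bigF n m L A B)ᵀ * bigQ n L Q)) * bigG n L A := by
  rw [Cmat, Matrix.mul_assoc _ (bigF n m L A B)ᵀ, inv_one_add_mul_inv_mul
    (bigR_posDef hR).isUnit (bigP_posDef A B hQ hR).isUnit, Matrix.mul_assoc _ (bigQ n L Q),
    Matrix.mul_sub, Matrix.mul_one, ← bigP.eq_1, transpose_mul, transpose_transpose,
    (bigQ_isSymm hQ).eq]
  simp only [Matrix.mul_assoc]

theorem isHermitian_Cmat (hQ : Q.PosSemidef) (hR : R.PosDef) :
    (Cmat n m L A B Q R).IsHermitian := by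
  have hX := (bigQ_posSemidef (L := L) hQ).1.sub <|
    isHermitian_conjTranspose_mul_mul ((bigF n m L A B)ᵀ * bigQ n L Q)
      (bigP_posDef A B hQ hR).1.inv
  rw [Cmat_eq A B hQ hR]
  simpa using isHermitian_conjTranspose_mul_mul (bigG n L A) hX

theorem isLeast_costJ (hQ : Q.PosSemidef) (hR : R.PosDef) (δ : SIdx n L → ℝ) :
    IsLeast (Set.range fun u => costJ n m L A B Q R u δ) (δ ⬝ᵥ (Cmat n m L A B Q R *ᵥ δ)) := by
  obtain ⟨⟨u₀, hu₀⟩, hlow⟩ := (bigP_posDef A B hQ hR).isLeast_dotProduct_mulVec_add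
    ((bigF n m L A B)ᵀ *ᵥ (bigQ n L Q *ᵥ (bigG n L A *ᵥ δ)))
  have hcost (u : UIdx m L → ℝ) : costJ n m L A B Q R u δ =
      u ⬝ᵥ (bigP n m L A B Q R *ᵥ u) +
        2 * (u ⬝ᵥ ((bigF n m L A B)ᵀ *ᵥ (bigQ n L Q *ᵥ (bigG n L A *ᵥ δ)))) +
        (bigG n L A *ᵥ δ) ⬝ᵥ (bigQ n L Q *ᵥ (bigG n L A *ᵥ δ)) :=
    (bigQ_isSymm hQ).quadratic_cost_expand _ _ u _
  rw [Cmat_eq A B hQ hR, dotProduct_transpose_mul_mul_mulVec, sub_mulVec, dotProduct_sub,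
    dotProduct_transpose_mul_mul_mulVec, ← mulVec_mulVec]
  refine ⟨⟨u₀, by simp only [hcost, hu₀]; ring⟩, ?_⟩
  rintro _ ⟨u, rfl⟩
  have := hlow ⟨u, rfl⟩
  simp only [hcost] at this ⊢
  linarith

end Clairvoyant

section Delay

variable {n m : ℕ} (L : ℕ) (A : Matrix (Fin n) (Fin n) ℝ) (B : Matrix (Fin n) (Fin m) ℝ)
  (Q : Matrix (Fin n) (Fin n) ℝ) (R : Matrix (Fin m) (Fin m) ℝ)

theorem Zshift_mul_bigA_mul_blockShift :
    Zshift n (L + 1) * bigA n (L + 1) A * blockShift (Fin n) (L + 2) (L + 1) =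
      blockShift (Fin n) (L + 2) (L + 1) * (Zshift n L * bigA n L A) := by
  ext p q
  simp only [Zshift_eq_blockShift, mul_blockShift_apply, blockShift_mul_apply, bigA, of_apply,
    Fin.ext_iff]
  split_ifs <;> first | rfl | omega

theorem Zshift_mul_bigB_mul_blockShift :
    Zshift n (L + 1) * bigB n m (L + 1) B * blockShift (Fin m) (L + 1) L =
      blockShift (Fin n) (L + 2) (L + 1) * (Zshift n L * bigB n m L B) := by
  ext p q
  simp only [Zshift_eq_blockShift, mul_blockShift_apply, blockShift_mul_apply, bigB, of_apply]
  split_ifs <;> first | rfl | omega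

theorem transpose_blockShift_mul_bigQ_mul_blockShift :
    (blockShift (Fin n) (L + 2) (L + 1))ᵀ * bigQ n (L + 1) Q * blockShift (Fin n) (L + 2) (L + 1) =
      bigQ n L Q := by
  ext p q
  simp only [mul_blockShift_apply, transpose_blockShift_mul_apply, bigQ, of_apply, Fin.ext_iff]
  split_ifs <;> first | rfl | omega

theorem transpose_blockShift_mul_bigR_mul_blockShift :
    (blockShift (Fin m) (L + 1) L)ᵀ * bigR m (L + 1) R * blockShift (Fin m) (L + 1) L =
      bigR m L R := by
  ext p q
  simp only [mul_blockShift_apply, transpose_blockShift_mul_apply, bigR, of_apply, Fin.ext_iff]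
  split_ifs <;> first | rfl | omega

theorem bigG_mul_blockShift :
    bigG n (L + 1) A * blockShift (Fin n) (L + 2) (L + 1) =
      blockShift (Fin n) (L + 2) (L + 1) * bigG n L A :=
  nonsing_inv_mul_eq_mul_nonsing_inv (isUnit_one_sub_Zshift_mul_bigA _ A)
    (isUnit_one_sub_Zshift_mul_bigA _ A) (by
      rw [Matrix.sub_mul, Matrix.mul_sub, Matrix.one_mul, Matrix.mul_one,
        Zshift_mul_bigA_mul_blockShift])

theorem bigF_mul_blockShift :
    bigF n m (L + 1) A B * blockShift (Fin m) (L + 1) L =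
      blockShift (Fin n) (L + 2) (L + 1) * bigF n m L A B := by
  rw [bigF, Matrix.mul_assoc, Zshift_mul_bigB_mul_blockShift, ← Matrix.mul_assoc, ← bigG.eq_1,
    bigG_mul_blockShift, Matrix.mul_assoc, bigG, ← bigF.eq_1]

theorem costJ_blockShift (u : UIdx m L → ℝ) (δ : SIdx n L → ℝ) :
    costJ n m (L + 1) A B Q R (blockShift (Fin m) (L + 1) L *ᵥ u)
      (blockShift (Fin n) (L + 2) (L + 1) *ᵥ δ) = costJ n m L A B Q R u δ := by
  have hx : bigF n m (L + 1) A B *ᵥ (blockShift (Fin m) (L + 1) L *ᵥ u) +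
      bigG n (L + 1) A *ᵥ (blockShift (Fin n) (L + 2) (L + 1) *ᵥ δ) =
      blockShift (Fin n) (L + 2) (L + 1) *ᵥ (bigF n m L A B *ᵥ u + bigG n L A *ᵥ δ) := by
    rw [mulVec_mulVec, mulVec_mulVec, bigF_mul_blockShift, bigG_mul_blockShift,
      ← mulVec_mulVec, ← mulVec_mulVec, ← mulVec_add]
  simp only [costJ]
  rw [hx, ← transpose_blockShift_mul_bigQ_mul_blockShift L Q,
    ← transpose_blockShift_mul_bigR_mul_blockShift L R, dotProduct_transpose_mul_mul_mulVec,
    dotProduct_transpose_mul_mul_mulVec]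

end Delay

theorem stmt13_general (n m T : ℕ)
    (A : Matrix (Fin n) (Fin n) ℝ) (B : Matrix (Fin n) (Fin m) ℝ)
    (Q : Matrix (Fin n) (Fin n) ℝ) (R : Matrix (Fin m) (Fin m) ℝ)
    (hQ : Q.PosSemidef) (hR : R.PosDef) :
    ((Cmat n m T A B Q R).submatrix
        (fun c : Fin T × Fin n => ((c.1.succ : Fin (T + 1)), c.2))
        (fun c : Fin T × Fin n => ((c.1.succ : Fin (T + 1)), c.2)) -
      (Cmat n m (T + 1) A B Q R).submatrix
        (fun c : Fin T × Fin n => ((c.1.succ.succ : Fin (T + 2)), c.2))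
        (fun c : Fin T × Fin n => ((c.1.succ.succ : Fin (T + 2)), c.2))).PosSemidef := by
  have hsub : (Cmat n m (T + 1) A B Q R).submatrix
      (fun c : Fin T × Fin n => (c.1.succ.succ, c.2))
      (fun c : Fin T × Fin n => (c.1.succ.succ, c.2)) =
      ((Cmat n m (T + 1) A B Q R).submatrix
        (fun c : Fin (T + 1) × Fin n => (c.1.succ, c.2))
        (fun c : Fin (T + 1) × Fin n => (c.1.succ, c.2))).submatrix
        (fun c : Fin T × Fin n => (c.1.succ, c.2)) (fun c : Fin T × Fin n => (c.1.succ, c.2)) :=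
    rfl
  refine .of_dotProduct_mulVec_nonneg (((isHermitian_Cmat A B hQ hR).submatrix _).sub
    ((isHermitian_Cmat A B hQ hR).submatrix _)) fun y => ?_
  rw [star_trivial, sub_mulVec, dotProduct_sub, sub_nonneg, hsub]
  simp only [submatrix_succ_eq_transpose_blockShift_mul, dotProduct_transpose_mul_mul_mulVec]
  obtain ⟨⟨u, hu⟩, -⟩ := isLeast_costJ A B hQ hR (blockShift (Fin n) (T + 1) T *ᵥ y)
  calc _ ≤ costJ n m (T + 1) A B Q R (blockShift (Fin m) (T + 1) T *ᵥ u) _ :=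
        (isLeast_costJ A B hQ hR _).2 ⟨_, rfl⟩
    _ = _ := costJ_blockShift T A B Q R u _
    _ = _ := hu

/-- Claim in the proof of Theorem 1: `𝐂_{T+1}^{[2:T+1, 2:T+1]} ⪯ 𝐂_T^{[1:T, 1:T]}`. -/
theorem stmt13 (n m T : ℕ) (hn : 0 < n) (hm : 0 < m) (hT : 1 ≤ T)
    (A : Matrix (Fin n) (Fin n) ℝ) (B : Matrix (Fin n) (Fin m) ℝ)
    (Q : Matrix (Fin n) (Fin n) ℝ) (R : Matrix (Fin m) (Fin m) ℝ)
    (hQ : Q.PosSemidef) (hR : R.PosDef) :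
    ((Cmat n m T A B Q R).submatrix
        (fun c : Fin T × Fin n => ((c.1.succ : Fin (T + 1)), c.2))
        (fun c : Fin T × Fin n => ((c.1.succ : Fin (T + 1)), c.2)) -
      (Cmat n m (T + 1) A B Q R).submatrix
        (fun c : Fin T × Fin n => ((c.1.succ.succ : Fin (T + 2)), c.2))
        (fun c : Fin T × Fin n => ((c.1.succ.succ : Fin (T + 2)), c.2))).PosSemidef :=
  stmt13_general n m T A B Q R hQ hR

end
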